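/- If x has order n and m = k·n for some k ≥ 1 with k odd and n ≥ 3 with m odd (i.e., both n and k odd), then tr((x + x⁻¹)^m) ≥ 2^k. -/

import Mathlib

/-!
By the binomial theorem, the coefficient of `1` in `(x + x⁻¹) ^ m` is the sum of `C(m, i)` over
the `i` with `x ^ i * x⁻¹ ^ (m - i) = 1`. If `x ^ n = 1` and `m = k * n`, every multiple `i = j * n`
qualifies, and `C(k * n, j * n) ≥ C(k, j)` (the words made of `k` constant blocks of length `n`),
so the coefficient is at least `∑ j, C(k, j) = 2 ^ k`.
-/

open Finset

namespace Nat

theorem choose_le_choose_mul {n : ℕ} (hn : 1 ≤ n) (k j : ℕ) :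
    k.choose j ≤ (k * n).choose (j * n) := by
  induction k generalizing j with
  | zero => cases j <;> simp
  | succ k ih =>
    cases j with
    | zero => simp
    | succ j =>
      have hvandermonde : (k * n).choose (j * n) + (k * n).choose ((j + 1) * n) ≤
          ((k + 1) * n).choose ((j + 1) * n) := by
        rw [add_one_mul k n, add_choose_eq]
        refine le_of_eq_of_le ?_ (add_le_sum
          (f := fun ij : ℕ × ℕ => (k * n).choose ij.1 * n.choose ij.2)
          (fun _ _ => Nat.zero_le _) (i := (j * n, n)) (j := ((j + 1) * n, 0)) ?_ ?_ ?_)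
        · simp
        · simp [add_mul]
        · simp
        · exact fun h => by have := congrArg Prod.snd h; omega
      rw [choose_succ_succ']
      exact (add_le_add (ih j) (ih (j + 1))).trans hvandermonde

end Nat

namespace MonoidAlgebra

theorem coeff_one_of_add_of_inv_pow {R G : Type*} [CommSemiring R] [Group G] [DecidableEq G]
    (x : G) (m : ℕ) :
    ((of R G x + of R G x⁻¹) ^ m).coeff 1 =
      ((∑ i ∈ range (m + 1) with x ^ i * x⁻¹ ^ (m - i) = 1, m.choose i : ℕ) : R) := by
  have hcomm : Commute (of R G x) (of R G x⁻¹) := by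
    simp only [Commute, SemiconjBy, ← map_mul, mul_inv_cancel, inv_mul_cancel]
  rw [hcomm.add_pow, coeff_sum, Finsupp.finsetSum_apply, sum_filter, Nat.cast_sum]
  refine sum_congr rfl fun i _ => ?_
  rw [← map_pow, ← map_pow, ← map_mul, of_apply, natCast_def, single_mul_single, one_mul,
    mul_one, coeff_single, Finsupp.single_apply]
  split_ifs <;> simp

end MonoidAlgebra

theorem two_pow_le_sum_choose_of_pow_eq_one {G : Type*} [Monoid G] [DecidableEq G] {x y : G}
    {n : ℕ} (hn : 1 ≤ n) (hx : x ^ n = 1) (hy : y ^ n = 1) (k : ℕ) :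
    2 ^ k ≤ ∑ i ∈ range (k * n + 1) with x ^ i * y ^ (k * n - i) = 1, (k * n).choose i := by
  have hblocks : (range (k + 1)).image (· * n) ⊆
      {i ∈ range (k * n + 1) | x ^ i * y ^ (k * n - i) = 1} := by
    intro i hi
    obtain ⟨j, hj, rfl⟩ := mem_image.1 hi
    have hjk : j ≤ k := Nat.lt_succ_iff.1 (mem_range.1 hj)
    refine mem_filter.2 ⟨mem_range.2 (Nat.lt_succ_of_le (Nat.mul_le_mul_right n hjk)), ?_⟩
    rw [← Nat.sub_mul, pow_mul', pow_mul', hx, hy, one_pow, one_pow, one_mul]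
  calc 2 ^ k = ∑ j ∈ range (k + 1), k.choose j := (Nat.sum_range_choose k).symm
    _ ≤ ∑ j ∈ range (k + 1), (k * n).choose (j * n) :=
      sum_le_sum fun j _ => Nat.choose_le_choose_mul hn k j
    _ = ∑ i ∈ (range (k + 1)).image (· * n), (k * n).choose i :=
      (sum_image fun _ _ _ _ => Nat.eq_of_mul_eq_mul_right hn).symm
    _ ≤ _ := sum_le_sum_of_subset hblocks

theorem stmt_8_general {G : Type*} [Group G] (x : G) (n k m : ℕ) (hn : 3 ≤ n)
    (hx : orderOf x = n) (hm : m = k * n) :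
    (2 : ℝ) ^ k ≤
      (((MonoidAlgebra.of ℂ G x + MonoidAlgebra.of ℂ G x⁻¹) ^ m).coeff (1 : G)).re := by
  classical
  have hxn : x ^ n = 1 := hx ▸ pow_orderOf_eq_one x
  rw [MonoidAlgebra.coeff_one_of_add_of_inv_pow, Complex.natCast_re, hm]
  exact_mod_cast two_pow_le_sum_choose_of_pow_eq_one (by omega) hxn
    (by rw [inv_pow, hxn, inv_one]) k

/-- If `x` has odd exact order `n ≥ 3` and `m = k·n` with `k ≥ 1` odd, then
`tr((x + x⁻¹)^m) ≥ 2^k` (as a real number: the trace is a nonnegative count, and we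
compare its real part). -/
theorem stmt_8 {G : Type*} [Group G] (x : G) (n k m : ℕ) (hn : 3 ≤ n) (hnodd : Odd n)
    (hk : 1 ≤ k) (hkodd : Odd k) (hx : orderOf x = n) (hm : m = k * n) :
    (2 : ℝ) ^ k ≤
      (((MonoidAlgebra.of ℂ G x + MonoidAlgebra.of ℂ G x⁻¹) ^ m).coeff (1 : G)).re :=
  stmt_8_general x n k m hn hx hm
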